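/- arXiv:1212.4265 — 3 statements merged into one kernel-verified Lean document; each statement's English description precedes it below -/
import Mathlib

section
/- Let {m_j} be a sequence of positive reals with m_0 = 1 such that ∑_{j≥1} m_{j-1}/(j·m_j) = ∞. Define α_j = m_j/m_{j-1}, μ_j = ∑_{k=1}^j 1/(k·α_k), and β_j = α_j·√(μ_j). Then the series ∑_{j≥1} 1/(j·β_j) diverges. -/
/-!
With `a_j = m_{j-1}/(j m_j) = 1/(j α_j)` we have `μ_j = a_1 + ⋯ + a_j` and
`1/(j β_j) = a_j / √μ_j`. Since `μ` is nondecreasing,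
`∑_{j ≤ n} a_j / √μ_j ≥ μ_n / √μ_n = √μ_n`, which tends to infinity with `μ_n`.
-/

open Filter Finset

section PartialSums

variable {a : ℕ → ℝ}

theorem sqrt_sum_range_le_sum_div_sqrt (ha : ∀ j, 0 ≤ a j) (n : ℕ) :
    √(∑ j ∈ range n, a j) ≤ ∑ j ∈ range n, a j / √(∑ i ∈ range (j + 1), a i) := by
  calc √(∑ j ∈ range n, a j)
      = ∑ j ∈ range n, a j / √(∑ i ∈ range n, a i) := by rw [← sum_div, Real.div_sqrt]
    _ ≤ ∑ j ∈ range n, a j / √(∑ i ∈ range (j + 1), a i) := by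
      refine sum_le_sum fun j hj => ?_
      rcases (ha j).eq_or_lt with hzero | hpos
      · simp [← hzero]
      have hle : a j ≤ ∑ i ∈ range (j + 1), a i :=
        single_le_sum (fun i _ => ha i) (self_mem_range_succ j)
      refine div_le_div_of_nonneg_left (ha j) (Real.sqrt_pos.2 (hpos.trans_le hle)) ?_
      exact Real.sqrt_le_sqrt <| sum_le_sum_of_subset_of_nonneg
        (range_subset_range.2 (mem_range.1 hj)) fun i _ _ => ha i

theorem not_summable_div_sqrt_sum_range (ha : ∀ j, 0 ≤ a j) (h : ¬ Summable a) :
    ¬ Summable fun j => a j / √(∑ i ∈ range (j + 1), a i) := by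
  rw [not_summable_iff_tendsto_nat_atTop_of_nonneg ha] at h
  rw [not_summable_iff_tendsto_nat_atTop_of_nonneg fun j => by have := ha j; positivity]
  exact tendsto_atTop_mono (sqrt_sum_range_le_sum_div_sqrt ha)
    (Real.tendsto_sqrt_atTop.comp h)

end PartialSums

theorem stmt1_general (m : ℕ → ℝ) (hpos : ∀ j, 0 < m j)
    (hdiv : ¬ Summable (fun j : ℕ => m j / ((j + 1 : ℝ) * m (j + 1)))) :
    ¬ Summable (fun j : ℕ =>
      1 / ((j + 1 : ℝ) *
        ((m (j + 1) / m j) *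
          Real.sqrt (∑ k ∈ Finset.range (j + 1),
            1 / ((k + 1 : ℝ) * (m (k + 1) / m k)))))) := by
  set a : ℕ → ℝ := fun k => 1 / ((k + 1 : ℝ) * (m (k + 1) / m k))
  have ha : ∀ j, 0 ≤ a j := fun j => by have := hpos j; have := hpos (j + 1); positivity
  have hdiv_a : ¬ Summable a := by
    convert hdiv using 2
    funext j
    rw [← one_div_div, mul_div_assoc]
  convert not_summable_div_sqrt_sum_range ha hdiv_a using 2
  funext j
  rw [← mul_assoc, ← div_div]

/-- If `∑ m_{j-1}/(j m_j) = ∞`, then with `α_j = m_j/m_{j-1}`,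
`μ_j = ∑_{k=1}^j 1/(k α_k)` and `β_j = α_j √(μ_j)`, the series
`∑ 1/(j β_j)` also diverges. (Indices shifted: `j = J+1`, `k = K+1`.) -/
theorem stmt1 (m : ℕ → ℝ) (hpos : ∀ j, 0 < m j) (h0 : m 0 = 1)
    (hdiv : ¬ Summable (fun j : ℕ => m j / ((j + 1 : ℝ) * m (j + 1)))) :
    ¬ Summable (fun j : ℕ =>
      1 / ((j + 1 : ℝ) *
        ((m (j + 1) / m j) *
          Real.sqrt (∑ k ∈ Finset.range (j + 1),
            1 / ((k + 1 : ℝ) * (m (k + 1) / m k)))))) :=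
  stmt1_general m hpos hdiv
end

section
/- Let {m_j} be a sequence of positive reals with m_0 = 1 satisfying ∑_{j≥1} m_{j-1}/(j·m_j) = ∞. Then there exists a sequence {m̃_j} of positive reals with m̃_0 = 1 such that: (a) ∑_{j≥1} m̃_{j-1}/(j·m̃_j) = ∞; (b) lim_{j→∞} (m̃_j/m_j)^{1/j} = ∞; and (c) sup_{j≥1} (m_j/m̃_j)^{1/j} < ∞. -/
/-!
With `a j = m j / ((j + 1) m (j + 1))` and partial sums `S n = ∑_{i<n} a i → ∞`, take
`m̃ j = m j ∏_{i<j} (1 + S i)`. Then `m̃` is at least `m` (giving (c) with bound `1`), its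
Denjoy–Carleman terms are `a j / (1 + S j)`, whose series still diverges since its partial sums
dominate `log (1 + S n)` (Abel–Dini), and `(m̃ j / m j)^(1/j)` is the exponential of the Cesàro
mean of `log (1 + S i) → ∞`.
-/

open Filter Finset

theorem Filter.Tendsto.cesaro_atTop {u : ℕ → ℝ} (h : Tendsto u atTop atTop) :
    Tendsto (fun n : ℕ => (n⁻¹ : ℝ) * ∑ i ∈ range n, u i) atTop atTop := by
  refine tendsto_atTop.2 fun b => ?_
  -- the truncations `min (u i) (b + 1)` have Cesàro means tending to `b + 1`
  have htrunc : Tendsto (fun i => min (u i) (b + 1)) atTop (nhds (b + 1)) :=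
    tendsto_const_nhds.congr'
      ((h.eventually_ge_atTop (b + 1)).mono fun i hi => (min_eq_right hi).symm)
  filter_upwards [htrunc.cesaro.eventually (lt_mem_nhds (lt_add_one b))] with n hn
  exact hn.le.trans (by gcongr with i; exact min_le_left _ _)

theorem tendsto_prod_range_rpow_one_div_atTop {b : ℕ → ℝ} (hpos : ∀ i, 0 < b i)
    (h : Tendsto b atTop atTop) :
    Tendsto (fun n : ℕ => (∏ i ∈ range n, b i) ^ ((1 : ℝ) / n)) atTop atTop := by
  have hmean : ∀ n : ℕ, (∏ i ∈ range n, b i) ^ ((1 : ℝ) / n)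
      = Real.exp ((n⁻¹ : ℝ) * ∑ i ∈ range n, Real.log (b i)) := fun n => by
    rw [Real.rpow_def_of_pos (prod_pos fun i _ => hpos i),
      Real.log_prod fun i _ => (hpos i).ne', one_div, mul_comm]
  exact (Real.tendsto_exp_atTop.comp (Real.tendsto_log_atTop.comp h).cesaro_atTop).congr
    fun n => (hmean n).symm

theorem one_add_sum_range_le_exp_sum_div {a : ℕ → ℝ} (ha : ∀ i, 0 ≤ a i) (n : ℕ) :
    1 + ∑ i ∈ range n, a i ≤ Real.exp (∑ i ∈ range n, a i / (1 + ∑ k ∈ range i, a k)) := by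
  induction n with
  | zero => simp
  | succ n ih =>
    have hS : 0 < 1 + ∑ i ∈ range n, a i := by
      linarith [sum_nonneg fun i (_ : i ∈ range n) => ha i]
    calc 1 + ∑ i ∈ range (n + 1), a i
        = (1 + ∑ i ∈ range n, a i) * (a n / (1 + ∑ i ∈ range n, a i) + 1) := by
          rw [sum_range_succ]; field_simp; ring
      _ ≤ Real.exp (∑ i ∈ range n, a i / (1 + ∑ k ∈ range i, a k))
            * Real.exp (a n / (1 + ∑ i ∈ range n, a i)) := by
          gcongr
          exacts [add_nonneg (div_nonneg (ha n) hS.le) zero_le_one, Real.add_one_le_exp _]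
      _ = _ := by rw [← Real.exp_add, sum_range_succ]

theorem not_summable_div_one_add_sum_range {a : ℕ → ℝ} (ha : ∀ i, 0 ≤ a i)
    (h : ¬ Summable a) : ¬ Summable (fun i => a i / (1 + ∑ k ∈ range i, a k)) := by
  have hsum : ∀ n, 0 < 1 + ∑ k ∈ range n, a k := fun n => by
    linarith [sum_nonneg fun i (_ : i ∈ range n) => ha i]
  have hS := (not_summable_iff_tendsto_nat_atTop_of_nonneg ha).1 h
  rw [not_summable_iff_tendsto_nat_atTop_of_nonneg fun i => div_nonneg (ha i) (hsum i).le]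
  refine tendsto_atTop_mono (fun n => ?_)
    (Real.tendsto_log_atTop.comp (tendsto_atTop_add_const_left _ 1 hS))
  exact (Real.log_le_iff_le_exp (hsum n)).2 (one_add_sum_range_le_exp_sum_div ha n)

/-- Lemma 3.1: for every quasi-analytic sequence `m` there is a quasi-analytic
sequence `mt` with `(mt j / m j)^(1/j) → ∞` and `sup_j (m j / mt j)^(1/j) < ∞`. -/
theorem stmt2 (m : ℕ → ℝ) (hpos : ∀ j, 0 < m j) (h0 : m 0 = 1)
    (hdiv : ¬ Summable (fun j : ℕ => m j / ((j + 1 : ℝ) * m (j + 1)))) :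
    ∃ mt : ℕ → ℝ, (∀ j, 0 < mt j) ∧ mt 0 = 1 ∧
      (¬ Summable (fun j : ℕ => mt j / ((j + 1 : ℝ) * mt (j + 1)))) ∧
      Tendsto (fun j : ℕ => (mt j / m j) ^ ((1 : ℝ) / j)) atTop atTop ∧
      (∃ C : ℝ, ∀ j : ℕ, 1 ≤ j → (m j / mt j) ^ ((1 : ℝ) / j) ≤ C) := by
  set a : ℕ → ℝ := fun j => m j / ((j + 1 : ℝ) * m (j + 1))
  have ha : ∀ j, 0 ≤ a j := fun j => by have := hpos j; have := hpos (j + 1); positivity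
  set S : ℕ → ℝ := fun n => ∑ i ∈ range n, a i
  have hS : ∀ n, 1 ≤ 1 + S n := fun n => le_add_of_nonneg_right (sum_nonneg fun i _ => ha i)
  set lam : ℕ → ℝ := fun n => ∏ i ∈ range n, (1 + S i)
  have hlam : ∀ n, 1 ≤ lam n := fun n => one_le_prod fun i _ => hS i
  have hlam_pos : ∀ n, 0 < lam n := fun n => one_pos.trans_le (hlam n)
  refine ⟨fun j => m j * lam j, fun j => mul_pos (hpos j) (hlam_pos j), by simp [lam, h0],
    ?_, ?_, 1, fun j _ => ?_⟩
  · have hterm : ∀ j : ℕ, m j * lam j / ((j + 1 : ℝ) * (m (j + 1) * lam (j + 1)))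
        = a j / (1 + S j) := fun j => by
      have hsucc : lam (j + 1) = lam j * (1 + S j) := prod_range_succ _ j
      have := hpos (j + 1); have := hlam_pos j; have := hS j
      simp only [a, hsucc]
      field_simp
    simpa only [hterm] using not_summable_div_one_add_sum_range ha hdiv
  · have hcancel : ∀ j, m j * lam j / m j = lam j := fun j =>
      mul_div_cancel_left₀ (lam j) (hpos j).ne'
    simpa only [hcancel] using tendsto_prod_range_rpow_one_div_atTop
      (fun i => one_pos.trans_le (hS i))
      (tendsto_atTop_add_const_left _ 1 ((not_summable_iff_tendsto_nat_atTop_of_nonneg ha).1 hdiv))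
  · have hmt : 0 < m j * lam j := mul_pos (hpos j) (hlam_pos j)
    refine Real.rpow_le_one (div_pos (hpos j) hmt).le ?_ (by positivity)
    exact (div_le_one hmt).2 (le_mul_of_one_le_right (hpos j).le (hlam j))
end

section
/- Let b_n > 0 with b_n → ∞ and b_n nondecreasing, let y_n > 0 satisfy y_n^{-1} ∈ [b_n, b_{n+1}], and define m̃_n = ∏_{k=1}^n b_k and φ̃(ξ) = sup_{t≥1} ξ^{t+1}/m̃_t. Then for every n, (y_n^{-1})^{n+1}/φ̃(y_n^{-1}) = m̃_n; consequently, the function g_n(x) = A_n/(2^n(z_n − x)) with A_n = 1/φ̃(y_n^{-1}) and z_n = x_n + i y_n satisfies |g_n^{(n)}(x_n)| = 2^{-n}·n!·m̃_n. -/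
open Filter Finset Complex
open scoped Nat

/-! The terms `ξ ^ (t + 2) / m̃ (t + 1)` of `φ̃ ξ` have consecutive ratios `ξ / b (t + 2)`, so for
`ξ ∈ [b n, b (n + 1)]` they increase up to `t = n - 1` and decrease afterwards: the supremum is
`ξ ^ (n + 1) / m̃ n`. The `n`-th derivative of `A / (z - x)` is `A n! / (z - x) ^ (n + 1)`, and
`|z_n - x_n| = y_n = ξ⁻¹`, which turns the first identity into the second. -/

theorem ciSup_eq_of_le_succ_of_succ_le {α : Type*} [ConditionallyCompleteLattice α]
    {f : ℕ → α} {N : ℕ} (hup : ∀ t < N, f t ≤ f (t + 1)) (hdown : ∀ t ≥ N, f (t + 1) ≤ f t) :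
    ⨆ t, f t = f N := by
  have hle : ∀ t, f t ≤ f N := by
    intro t
    rcases le_total t N with htN | hNt
    · have hmono : Monotone fun t => f (min t N) := monotone_nat_of_le_succ fun t => by
        rcases lt_or_ge t N with ht | ht
        · simpa [min_eq_left ht.le, min_eq_left (Nat.succ_le_of_lt ht)] using hup t ht
        · simp [min_eq_right ht, min_eq_right (ht.trans t.le_succ)]
      simpa [min_eq_left htN] using hmono htN
    · exact antitoneOn_nat_Ici_of_succ_le hdown (le_refl N) hNt hNt
  exact ciSup_eq_of_forall_le_of_forall_lt_exists_gt hle fun w hw => ⟨N, hw⟩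

theorem pow_div_prod_Icc_succ {𝕜 : Type*} [Field 𝕜] (b : ℕ → 𝕜) (ξ : 𝕜) (t : ℕ) :
    ξ ^ (t + 3) / ∏ k ∈ Icc 1 (t + 2), b k
      = (ξ ^ (t + 2) / ∏ k ∈ Icc 1 (t + 1), b k) * (ξ / b (t + 2)) := by
  rw [prod_Icc_succ_top (by omega : 1 ≤ t + 2)]
  ring

theorem ciSup_pow_div_prod_Icc {b : ℕ → ℝ} {ξ : ℝ} {N : ℕ} (hb : ∀ k, 0 < b k)
    (hbmono : Monotone b) (hξN : b (N + 1) ≤ ξ) (hξN' : ξ ≤ b (N + 2)) :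
    ⨆ t : ℕ, ξ ^ (t + 2) / ∏ k ∈ Icc 1 (t + 1), b k
      = ξ ^ (N + 2) / ∏ k ∈ Icc 1 (N + 1), b k := by
  have hξ : 0 < ξ := (hb _).trans_le hξN
  have hterm (t : ℕ) : 0 ≤ ξ ^ (t + 2) / ∏ k ∈ Icc 1 (t + 1), b k :=
    div_nonneg (pow_nonneg hξ.le _) (prod_nonneg fun k _ => (hb k).le)
  refine ciSup_eq_of_le_succ_of_succ_le (fun t ht => ?_) (fun t ht => ?_)
  · rw [pow_div_prod_Icc_succ]
    refine le_mul_of_one_le_right (hterm t) ((one_le_div (hb _)).2 ?_)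
    exact (hbmono (by omega)).trans hξN
  · rw [pow_div_prod_Icc_succ]
    refine mul_le_of_le_one_right (hterm t) ((div_le_one (hb _)).2 ?_)
    exact hξN'.trans (hbmono (by omega))

theorem sub_ofReal_ne_zero {z : ℂ} (hz : z.im ≠ 0) (x : ℝ) : z - x ≠ 0 :=
  fun h => hz (by simpa using congrArg im h)

theorem iteratedDeriv_div_sub_ofReal {z : ℂ} (hz : z.im ≠ 0) (c : ℂ) (n : ℕ) :
    iteratedDeriv n (fun x : ℝ => c / (z - x)) = fun x : ℝ => c * n ! / (z - x) ^ (n + 1) := by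
  induction n with
  | zero => simp
  | succ n ih =>
    ext x
    rw [iteratedDeriv_succ, ih]
    have hsub : HasDerivAt (fun x : ℝ => z - (x : ℂ)) (-1) x := by
      simpa using (ofRealCLM.hasDerivAt (x := x)).const_sub z
    have hne := sub_ofReal_ne_zero hz x
    have hderiv := (hasDerivAt_const x (c * n !)).fun_div (hsub.fun_pow (n + 1))
      (pow_ne_zero _ hne)
    rw [hderiv.deriv, Nat.factorial_succ]
    field_simp
    push_cast
    ring

theorem stmt18_general (b xs ys : ℕ → ℝ) (hb : ∀ k, 0 < b k) (hbmono : Monotone b)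
    (hy : ∀ n, 0 < ys n)
    (hmem : ∀ n : ℕ, (ys n)⁻¹ ∈ Set.Icc (b n) (b (n + 1))) :
    ∀ n : ℕ, 1 ≤ n →
      ((ys n)⁻¹) ^ (n + 1) /
          (⨆ t : ℕ, ((ys n)⁻¹) ^ (t + 2) / ∏ k ∈ Finset.Icc 1 (t + 1), b k)
        = ∏ k ∈ Finset.Icc 1 n, b k ∧
      ‖iteratedDeriv n
          (fun x : ℝ =>
            (((⨆ t : ℕ, ((ys n)⁻¹) ^ (t + 2) / ∏ k ∈ Finset.Icc 1 (t + 1), b k)⁻¹ : ℝ) : ℂ) /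
              ((2 : ℂ) ^ n * (((xs n : ℂ) + (ys n : ℂ) * Complex.I) - ((x : ℝ) : ℂ))))
          (xs n)‖
        = ((2 : ℝ) ^ n)⁻¹ * (Nat.factorial n : ℝ) * ∏ k ∈ Finset.Icc 1 n, b k := by
  intro n hn
  obtain ⟨N, rfl⟩ := Nat.exists_eq_add_of_le' hn
  set ξ := (ys (N + 1))⁻¹
  set S := ⨆ t : ℕ, ξ ^ (t + 2) / ∏ k ∈ Icc 1 (t + 1), b k
  have hξ : 0 < ξ := inv_pos.2 (hy _)
  have hS : S = ξ ^ (N + 1 + 1) / ∏ k ∈ Icc 1 (N + 1), b k :=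
    ciSup_pow_div_prod_Icc hb hbmono (hmem _).1 (hmem _).2
  have hSpos : 0 < S := hS ▸ div_pos (pow_pos hξ _) (prod_pos fun k _ => hb k)
  have hratio : ξ ^ (N + 1 + 1) / S = ∏ k ∈ Icc 1 (N + 1), b k := by
    rw [hS, div_div_cancel₀ (pow_ne_zero _ hξ.ne')]
  refine ⟨hratio, ?_⟩
  have hz : ((xs (N + 1) : ℂ) + ys (N + 1) * I).im ≠ 0 := by simpa using (hy _).ne'
  simp_rw [← div_div]
  rw [iteratedDeriv_div_sub_ofReal hz, ← hratio]
  have hys : ys (N + 1) = ξ⁻¹ := (inv_inv _).symm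
  simp only [add_sub_cancel_left, norm_div, norm_mul, norm_pow, norm_real, norm_natCast, norm_I,
    Real.norm_eq_abs, mul_one, RCLike.norm_ofNat, hys, abs_inv, inv_pow, abs_of_pos hξ,
    abs_of_pos hSpos]
  field_simp

/-- Step 4: with `m̃_n = ∏_{k=1}^n b_k`, `φ̃(ξ) = sup_{t ≥ 1} ξ^{t+1}/m̃_t`,
and `y_n⁻¹ ∈ [b_n, b_{n+1}]`, one has `(y_n⁻¹)^{n+1}/φ̃(y_n⁻¹) = m̃_n`;
consequently the building block `g_n(x) = A_n/(2^n(z_n − x))` with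
`A_n = 1/φ̃(y_n⁻¹)` and `z_n = x_n + i y_n` satisfies
`|g_n^{(n)}(x_n)| = 2^{-n} n! m̃_n`. -/
theorem stmt18 (b xs ys : ℕ → ℝ) (hb : ∀ k, 0 < b k) (hbmono : Monotone b)
    (hbtop : Tendsto b atTop atTop)
    (hy : ∀ n, 0 < ys n)
    (hmem : ∀ n : ℕ, (ys n)⁻¹ ∈ Set.Icc (b n) (b (n + 1))) :
    ∀ n : ℕ, 1 ≤ n →
      ((ys n)⁻¹) ^ (n + 1) /
          (⨆ t : ℕ, ((ys n)⁻¹) ^ (t + 2) / ∏ k ∈ Finset.Icc 1 (t + 1), b k)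
        = ∏ k ∈ Finset.Icc 1 n, b k ∧
      ‖iteratedDeriv n
          (fun x : ℝ =>
            (((⨆ t : ℕ, ((ys n)⁻¹) ^ (t + 2) / ∏ k ∈ Finset.Icc 1 (t + 1), b k)⁻¹ : ℝ) : ℂ) /
              ((2 : ℂ) ^ n * (((xs n : ℂ) + (ys n : ℂ) * Complex.I) - ((x : ℝ) : ℂ))))
          (xs n)‖
        = ((2 : ℝ) ^ n)⁻¹ * (Nat.factorial n : ℝ) * ∏ k ∈ Finset.Icc 1 n, b k :=
  stmt18_general b xs ys hb hbmono hy hmem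
end
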